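/- arXiv:1401.5925 — 2 statements merged into one kernel-verified Lean document; each statement's English description precedes it below -/
import Mathlib

section
/- Let P ≥ 1, let x_i, x_j ∈ ℝ^P with x_i ≠ x_j, and let y_i, y_j ∈ ℝ^P. Define d(t) = ‖(x_i + t·y_i) − (x_j + t·y_j)‖, r = ‖x_i − x_j‖, ṙ = r⁻¹·⟨x_i − x_j, y_i − y_j⟩, and r̈ = r⁻¹·(‖y_i − y_j‖² − ṙ²). Then the third derivative of d at t = 0 equals −3·r⁻¹·ṙ·r̈. -/
/-!
With `u = xᵢ - xⱼ` and `v = yᵢ - yⱼ`, the distance `d t = ‖u + t • v‖` is smooth near `0`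
(as `u ≠ 0`) and its square `‖u‖² + 2⟪u, v⟫ t + ‖v‖² t²` is quadratic. Comparing the first three
derivatives of `d * d` at `0` via Leibniz' rule gives `2 r ḋ = 2⟪u, v⟫`, `2 ḋ² + 2 r d̈ = 2‖v‖²`
and `6 ḋ d̈ + 2 r d⃛ = 0`, i.e. `ḋ = ṙ`, `d̈ = r̈` and `d⃛ = -3 r⁻¹ ṙ r̈`.
-/

open scoped InnerProductSpace

section MulSelf

variable {𝕜 : Type*} [NontriviallyNormedField 𝕜] {f : 𝕜 → 𝕜} {x : 𝕜}

theorem deriv_mul_self (hf : DifferentiableAt 𝕜 f x) :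
    deriv (f * f) x = 2 * f x * deriv f x := by
  rw [deriv_mul hf hf]
  ring

theorem iteratedDeriv_two_mul_self (hf : ContDiffAt 𝕜 2 f x) :
    iteratedDeriv 2 (f * f) x = 2 * deriv f x ^ 2 + 2 * f x * iteratedDeriv 2 f x := by
  rw [iteratedDeriv_mul hf hf]
  simp only [Finset.sum_range_succ, Finset.sum_range_zero, iteratedDeriv_zero, iteratedDeriv_one]
  norm_num [Nat.choose]
  ring

theorem iteratedDeriv_three_mul_self (hf : ContDiffAt 𝕜 3 f x) :
    iteratedDeriv 3 (f * f) x =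
      6 * deriv f x * iteratedDeriv 2 f x + 2 * f x * iteratedDeriv 3 f x := by
  rw [iteratedDeriv_mul hf hf]
  simp only [Finset.sum_range_succ, Finset.sum_range_zero, iteratedDeriv_zero, iteratedDeriv_one]
  norm_num [Nat.choose]
  ring

theorem iteratedDeriv_three_eq_of_iteratedDeriv_three_mul_self_eq_zero [CharZero 𝕜]
    (hf : ContDiffAt 𝕜 3 f x) (hfx : f x ≠ 0) (h : iteratedDeriv 3 (f * f) x = 0) :
    iteratedDeriv 3 f x = -3 * deriv f x * iteratedDeriv 2 f x / f x := by
  rw [iteratedDeriv_three_mul_self hf] at h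
  field_simp
  linear_combination h / 2

end MulSelf

section Quadratic

variable {𝕜 : Type*} [NontriviallyNormedField 𝕜] (a b c : 𝕜)

theorem hasDerivAt_quadratic (t : 𝕜) :
    HasDerivAt (fun t => a + b * t + c * t ^ 2) (b + 2 * c * t) t :=
  (((hasDerivAt_id' t).const_mul b).const_add a |>.fun_add
    ((hasDerivAt_pow 2 t).const_mul c)).congr_deriv (by ring)

theorem deriv_quadratic : deriv (fun t => a + b * t + c * t ^ 2) = fun t => b + 2 * c * t :=
  funext fun t => (hasDerivAt_quadratic a b c t).deriv

theorem iteratedDeriv_two_quadratic :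
    iteratedDeriv 2 (fun t => a + b * t + c * t ^ 2) = fun _ => 2 * c := by
  rw [iteratedDeriv_succ, iteratedDeriv_one, deriv_quadratic]
  funext t
  simp

theorem iteratedDeriv_three_quadratic :
    iteratedDeriv 3 (fun t => a + b * t + c * t ^ 2) = 0 := by
  rw [iteratedDeriv_succ, iteratedDeriv_two_quadratic]
  funext t
  simp

end Quadratic

theorem norm_add_smul_sq {F : Type*} [SeminormedAddCommGroup F] [InnerProductSpace ℝ F]
    (u v : F) (t : ℝ) : ‖u + t • v‖ ^ 2 = ‖u‖ ^ 2 + 2 * ⟪u, v⟫_ℝ * t + ‖v‖ ^ 2 * t ^ 2 := by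
  rw [norm_add_sq_real, real_inner_smul_right, norm_smul, mul_pow, Real.norm_eq_abs, sq_abs]
  ring

theorem third_deriv_dist_general
    (P : ℕ)
    (xi xj yi yj : EuclideanSpace ℝ (Fin P))
    (hxij : xi ≠ xj)
    (d : ℝ → ℝ) (hd : ∀ t, d t = ‖(xi + t • yi) - (xj + t • yj)‖)
    (r : ℝ) (hr : r = ‖xi - xj‖)
    (rdot : ℝ) (hrdot : rdot = r⁻¹ * (inner ℝ (xi - xj) (yi - yj) : ℝ))
    (rddot : ℝ) (hrddot : rddot = r⁻¹ * (‖yi - yj‖ ^ 2 - rdot ^ 2)) :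
    iteratedDeriv 3 d 0 = -3 * r⁻¹ * rdot * rddot := by
  set u := xi - xj
  set v := yi - yj
  have hd_eq : d = fun t => ‖u + t • v‖ := funext fun t => by
    rw [hd, smul_sub]
    congr 1
    simp only [u]
    abel
  have hu : u ≠ 0 := sub_ne_zero.mpr hxij
  have hsmooth : ContDiffAt ℝ 3 d 0 := by
    rw [hd_eq]
    exact ContDiffAt.norm ℝ (by fun_prop) (by simpa using hu)
  have hsq : d * d = fun t => ‖u‖ ^ 2 + 2 * ⟪u, v⟫_ℝ * t + ‖v‖ ^ 2 * t ^ 2 := by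
    funext t
    rw [Pi.mul_apply, ← sq, hd_eq, norm_add_smul_sq]
  have hd0 : d 0 = r := by simp [hd_eq, hr, u]
  have hr0 : r ≠ 0 := hr ▸ norm_ne_zero_iff.mpr hu
  have hdot : deriv d 0 = rdot := by
    have h := deriv_mul_self (hsmooth.differentiableAt (by norm_num))
    rw [hsq, deriv_quadratic, hd0] at h
    rw [hrdot]
    field_simp
    linear_combination -h / 2
  have hddot : iteratedDeriv 2 d 0 = rddot := by
    have h := iteratedDeriv_two_mul_self (hsmooth.of_le (by norm_num))
    rw [hsq, iteratedDeriv_two_quadratic, hd0, hdot] at h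
    rw [hrddot]
    field_simp
    linear_combination -h / 2
  rw [iteratedDeriv_three_eq_of_iteratedDeriv_three_mul_self_eq_zero hsmooth (hd0 ▸ hr0)
    (by rw [hsq, iteratedDeriv_three_quadratic, Pi.zero_apply]), hdot, hddot, hd0, div_eq_inv_mul]
  ring

/-- Appendix A (eq. rangeL3): third derivative of the time-varying distance between
two nodes in linear motion, at `t = 0`, equals `-3 r⁻¹ ṙ r̈`. -/
theorem third_deriv_dist
    (P : ℕ) (hP : 1 ≤ P)
    (xi xj yi yj : EuclideanSpace ℝ (Fin P))
    (hxij : xi ≠ xj)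
    (d : ℝ → ℝ) (hd : ∀ t, d t = ‖(xi + t • yi) - (xj + t • yj)‖)
    (r : ℝ) (hr : r = ‖xi - xj‖)
    (rdot : ℝ) (hrdot : rdot = r⁻¹ * (inner ℝ (xi - xj) (yi - yj) : ℝ))
    (rddot : ℝ) (hrddot : rddot = r⁻¹ * (‖yi - yj‖ ^ 2 - rdot ^ 2)) :
    iteratedDeriv 3 d 0 = -3 * r⁻¹ * rdot * rddot :=
  third_deriv_dist_general P xi xj yi yj hxij d hd r hr rdot hrdot rddot hrddot
end

section
/- Let N ≥ 1 and P ≥ 1, let X, Y ∈ ℝ^{P×N} have columns x_1, …, x_N and y_1, …, y_N respectively, let M ∈ ℝ^{N×N} be the symmetric matrix with entries M_{ij} = ⟨x_i − x_j, y_i − y_j⟩, and let P_c = I_N − N⁻¹·𝟙𝟙ᵀ be the centering matrix. Then −P_c·M·P_c = P_c·(Xᵀ·Y + Yᵀ·X)·P_c. -/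
/-!
Polarization writes `M = d 𝟙ᵀ + 𝟙 dᵀ - (Xᵀ Y + Yᵀ X)` with `dᵢ = ⟨xᵢ, yᵢ⟩` the diagonal of `Xᵀ Y`,
and the centering matrix annihilates `𝟙` from both sides, so it kills the first two terms.
-/

open Matrix

section Centering

variable (n K : Type*) [Fintype n] [DecidableEq n] [Field K]

def centeringMatrix : Matrix n n K := 1 - (Fintype.card n : K)⁻¹ • of fun _ _ => 1

variable {n K}

theorem centeringMatrix_mulVec_one (hn : (Fintype.card n : K) ≠ 0) :
    centeringMatrix n K *ᵥ 1 = 0 := by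
  ext i
  simp [centeringMatrix, mulVec, dotProduct, one_apply, hn]

theorem transpose_centeringMatrix : (centeringMatrix n K)ᵀ = centeringMatrix n K := by
  simp [centeringMatrix, transpose_sub, ← ext_iff]

theorem one_vecMul_centeringMatrix (hn : (Fintype.card n : K) ≠ 0) :
    1 ᵥ* centeringMatrix n K = 0 := by
  rw [← mulVec_transpose, transpose_centeringMatrix, centeringMatrix_mulVec_one hn]

theorem centeringMatrix_mul_vecMulVec_add_mul_eq_zero (hn : (Fintype.card n : K) ≠ 0)
    (u v : n → K) :
    centeringMatrix n K * (vecMulVec u 1 + vecMulVec 1 v) * centeringMatrix n K = 0 := by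
  rw [mul_add, add_mul, mul_assoc, vecMulVec_mul, mul_vecMulVec, mul_vecMulVec,
    one_vecMul_centeringMatrix hn, centeringMatrix_mulVec_one hn, vecMulVec_zero, zero_vecMulVec,
    zero_mul, zero_add]

end Centering

theorem of_sum_sub_mul_sub_eq {m n R : Type*} [Fintype m] [CommRing R] (X Y : Matrix m n R) :
    of (fun i j => ∑ p, (X p i - X p j) * (Y p i - Y p j)) =
      vecMulVec (Xᵀ * Y).diag 1 + vecMulVec 1 (Xᵀ * Y).diag - (Xᵀ * Y + Yᵀ * X) := by
  ext i j
  simp only [of_apply, Matrix.sub_apply, Matrix.add_apply, vecMulVec_apply, diag_apply, mul_apply,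
    transpose_apply, Pi.one_apply, mul_one, one_mul, ← Finset.sum_add_distrib,
    ← Finset.sum_sub_distrib]
  exact Finset.sum_congr rfl fun p _ => by ring

theorem centered_mixed_kinematic_matrix_general
    (N P : ℕ) (hN : 1 ≤ N)
    (X Y : Matrix (Fin P) (Fin N) ℝ)
    (M : Matrix (Fin N) (Fin N) ℝ)
    (hM : ∀ i j, M i j = ∑ p, (X p i - X p j) * (Y p i - Y p j))
    (Pc : Matrix (Fin N) (Fin N) ℝ)
    (hPc : Pc = 1 - (N : ℝ)⁻¹ • Matrix.of (fun _ _ => (1 : ℝ))) :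
    -(Pc * M * Pc) = Pc * (Xᵀ * Y + Yᵀ * X) * Pc := by
  have hcard : (Fintype.card (Fin N) : ℝ) ≠ 0 := by
    rw [Fintype.card_fin, Nat.cast_ne_zero]
    omega
  have hPc' : Pc = centeringMatrix (Fin N) ℝ := by rw [hPc, centeringMatrix, Fintype.card_fin]
  have hM' : M = of fun i j => ∑ p, (X p i - X p j) * (Y p i - Y p j) := Matrix.ext hM
  rw [hPc', hM', of_sum_sub_mul_sub_eq, mul_sub, sub_mul,
    centeringMatrix_mul_vecMulVec_add_mul_eq_zero hcard, zero_sub, neg_neg]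

/-- Eqs. (25b)/(26b)/(27b): for `M_{ij} = ⟨xᵢ - xⱼ, yᵢ - yⱼ⟩` (i.e. `M = R ⊙ Ṙ`),
`-P_c M P_c = P_c (Xᵀ Y + Yᵀ X) P_c`. -/
theorem centered_mixed_kinematic_matrix
    (N P : ℕ) (hN : 1 ≤ N) (hP : 1 ≤ P)
    (X Y : Matrix (Fin P) (Fin N) ℝ)
    (M : Matrix (Fin N) (Fin N) ℝ)
    (hM : ∀ i j, M i j = ∑ p, (X p i - X p j) * (Y p i - Y p j))
    (Pc : Matrix (Fin N) (Fin N) ℝ)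
    (hPc : Pc = 1 - (N : ℝ)⁻¹ • Matrix.of (fun _ _ => (1 : ℝ))) :
    -(Pc * M * Pc) = Pc * (Xᵀ * Y + Yᵀ * X) * Pc :=
  centered_mixed_kinematic_matrix_general N P hN X Y M hM Pc hPc
end
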